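/- arXiv:0907.4840 — 4 statements merged into one kernel-verified Lean document; each statement's English description precedes it below -/
import Mathlib

section
/- Let K be an algebraically closed field of characteristic p > 2 and let M ≥ m ≥ 1, N ≥ n ≥ 1. The evaluation homomorphism p_e maps the algebra A_ns(M|N) into the algebra A_ns(m|n). -/
open MvPolynomial

noncomputable section

/-- The substitution `x_m = y_n = T`, landing in polynomials in `T` over the original ring
(the image only involves the remaining variables). -/
def psiSub (K : Type*) [CommSemiring K] (m n : ℕ) :
    MvPolynomial (Fin m ⊕ Fin n) K →ₐ[K] Polynomial (MvPolynomial (Fin m ⊕ Fin n) K) :=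
  MvPolynomial.aeval (Sum.elim
    (fun i : Fin m => if (i : ℕ) = m - 1 then Polynomial.X
      else Polynomial.C (MvPolynomial.X (Sum.inl i)))
    (fun j : Fin n => if (j : ℕ) = n - 1 then Polynomial.X
      else Polynomial.C (MvPolynomial.X (Sum.inr j))))

/-- `f` is supersymmetric: symmetric in the `x` and `y` variables separately, and
`(d/dT) f|_{x_m = y_n = T} = 0`. -/
def IsSupersymmetric (K : Type*) [CommSemiring K] (m n : ℕ)
    (f : MvPolynomial (Fin m ⊕ Fin n) K) : Prop :=
  (∀ σ : Equiv.Perm (Fin m), MvPolynomial.rename (Sum.map σ id) f = f) ∧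
  (∀ τ : Equiv.Perm (Fin n), MvPolynomial.rename (Sum.map id τ) f = f) ∧
  Polynomial.derivative (psiSub K m n f) = 0

/-- `c_r(x|y) = Σ_{i=0}^{min(r,m)} (−1)^{r−i} σ_i(x) h_{r−i}(y)`. -/
def cpoly (K : Type*) [CommRing K] (m n r : ℕ) : MvPolynomial (Fin m ⊕ Fin n) K :=
  ∑ i ∈ Finset.range (min r m + 1),
    (-1 : MvPolynomial (Fin m ⊕ Fin n) K) ^ (r - i) *
      (MvPolynomial.rename Sum.inl (MvPolynomial.esymm (Fin m) K i)) *
      (MvPolynomial.rename Sum.inr (MvPolynomial.hsymm (Fin n) K (r - i)))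

/-- σ_i(x_1,…,x_m), viewed in K[x_1,…,x_m,y_1,…,y_n]. -/
def sigmaX (K : Type*) [CommSemiring K] (m n i : ℕ) : MvPolynomial (Fin m ⊕ Fin n) K :=
  MvPolynomial.rename Sum.inl (MvPolynomial.esymm (Fin m) K i)

/-- σ_j(y_1,…,y_n), viewed in K[x_1,…,x_m,y_1,…,y_n]. -/
def sigmaY (K : Type*) [CommSemiring K] (m n j : ℕ) : MvPolynomial (Fin m ⊕ Fin n) K :=
  MvPolynomial.rename Sum.inr (MvPolynomial.esymm (Fin n) K j)

/-- The generators of the algebra `A_ns(m|n)` of nice supersymmetric polynomials: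
`c_r` (r ≥ 0), `σ_i(x)^p` (1 ≤ i ≤ m), `σ_j(y)^p` (1 ≤ j ≤ n) and
`u_k = σ_m(x)^k σ_n(y)^{p-k}` (0 < k < p). -/
def nsGens (K : Type*) [CommRing K] (p m n : ℕ) : Set (MvPolynomial (Fin m ⊕ Fin n) K) :=
  {f | ∃ r : ℕ, f = cpoly K m n r} ∪
  {f | ∃ i : ℕ, 1 ≤ i ∧ i ≤ m ∧ f = (sigmaX K m n i) ^ p} ∪
  {f | ∃ j : ℕ, 1 ≤ j ∧ j ≤ n ∧ f = (sigmaY K m n j) ^ p} ∪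
  {f | ∃ k : ℕ, 0 < k ∧ k < p ∧ f = (sigmaX K m n m) ^ k * (sigmaY K m n n) ^ (p - k)}

/-- The evaluation morphism `p_e` sending `x_i ↦ x_i` (i ≤ m), `y_j ↦ y_j` (j ≤ n) and the
remaining variables to `0`. -/
def pe (K : Type*) [CommSemiring K] (M N m n : ℕ) :
    MvPolynomial (Fin M ⊕ Fin N) K →ₐ[K] MvPolynomial (Fin m ⊕ Fin n) K :=
  MvPolynomial.aeval (Sum.elim
    (fun i : Fin M => if h : (i : ℕ) < m then MvPolynomial.X (Sum.inl ⟨(i : ℕ), h⟩) else 0)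
    (fun j : Fin N => if h : (j : ℕ) < n then MvPolynomial.X (Sum.inr ⟨(j : ℕ), h⟩) else 0))

end

/-!
Killing the variables `x_{m+1}, …, x_M` and `y_{n+1}, …, y_N` turns `σ_i` and `h_r` in `M`
(resp. `N`) variables into the same polynomials in `m` (resp. `n`) variables, because every
monomial containing a killed variable vanishes and the surviving ones correspond bijectively.
Hence `p_e` fixes each `c_r`, sends `σ_i^p` to `σ_i^p` or to `0` (when `i` exceeds the number of
remaining variables), and sends `u_k` to `u_k` when `(M, N) = (m, n)` and to `0` otherwise, since
then `σ_M(x)` or `σ_N(y)` is killed. So the generators of `A_ns(M|N)` land in `A_ns(m|n)`.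
-/

open Finset

section
variable {R A σ τ : Type*} [CommSemiring R] [CommSemiring A] [Algebra R A] [Fintype σ] [Fintype τ]

theorem aeval_esymm_of_eq_zero_off_range (e : σ ↪ τ) {f : τ → A}
    (hf : ∀ t ∉ Set.range e, f t = 0) (n : ℕ) :
    aeval f (esymm τ R n) = aeval (f ∘ e) (esymm σ R n) := by
  classical
  simp only [aeval_esymm_eq_multiset_esymm, esymm_map_val]
  refine (sum_of_injOn (Finset.map e) (map_injective e).injOn (fun u hu => ?_)
    (fun t ht hte => ?_) (fun u _ => (prod_map u e f).symm)).symm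
  · simpa using (mem_powersetCard.1 hu).2
  by_cases hsub : t ⊆ univ.map e
  · obtain ⟨u, -, rfl⟩ := subset_map_iff.1 hsub
    exact absurd ⟨u, by simpa using (mem_powersetCard.1 ht).2, rfl⟩ hte
  · obtain ⟨a, hat, ha⟩ := not_subset.1 hsub
    exact prod_eq_zero hat (hf a (by simpa using ha))

theorem esymm_eq_zero_of_card_lt {i : ℕ} (h : Fintype.card σ < i) : esymm σ R i = 0 := by
  rw [esymm, powersetCard_eq_empty.2 (by simpa using h), sum_empty]

theorem aeval_hsymm [DecidableEq σ] (f : σ → A) (n : ℕ) :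
    aeval f (hsymm σ R n) = ∑ s : Sym σ n, ((s : Multiset σ).map f).prod := by
  simp [hsymm, map_multiset_prod, Multiset.map_map]

theorem Sym.mem_range_map_of_forall_mem_range {α β : Type*} {n : ℕ} (e : α → β) (s : Sym β n)
    (hs : ∀ b ∈ s, b ∈ Set.range e) : s ∈ Set.range (Sym.map e) :=
  ⟨s.attach.map fun b : {b // b ∈ s} => Set.rangeSplitting e ⟨b, hs b b.2⟩, by
    rw [Sym.map_map]
    conv_rhs => rw [← Sym.attach_map_coe s]
    exact Sym.map_congr fun b _ => Set.apply_rangeSplitting e _⟩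

theorem aeval_hsymm_of_eq_zero_off_range [DecidableEq σ] [DecidableEq τ] (e : σ ↪ τ) {f : τ → A}
    (hf : ∀ t ∉ Set.range e, f t = 0) (n : ℕ) :
    aeval f (hsymm τ R n) = aeval (f ∘ e) (hsymm σ R n) := by
  rw [aeval_hsymm, aeval_hsymm]
  refine (Fintype.sum_of_injective (Sym.map e) (Sym.map_injective e.injective n) _ _
    (fun s hs => ?_) (fun s => by simp [Sym.coe_map, Multiset.map_map])).symm
  by_contra hne
  refine hs (Sym.mem_range_map_of_forall_mem_range e s fun b hb => ?_)
  by_contra hb'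
  exact hne (Multiset.prod_eq_zero (Multiset.mem_map.2 ⟨b, hb, hf b hb'⟩))

end

section
variable {K : Type*} [CommRing K] {M N m n : ℕ}

theorem pe_rename_inl_of_aeval_eq (hM : m ≤ M) {P : MvPolynomial (Fin M) K}
    {Q : MvPolynomial (Fin m) K}
    (h : ∀ f : Fin M → MvPolynomial (Fin m ⊕ Fin n) K,
      (∀ i ∉ Set.range (Fin.castLEEmb hM), f i = 0) → aeval f P = aeval (f ∘ Fin.castLEEmb hM) Q) :
    pe K M N m n (rename Sum.inl P) = rename Sum.inl Q := by
  rw [pe, aeval_rename, h _ fun i hi => ?_, rename_eq_aeval]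
  · congr 2
    funext i
    simp
  · simp only [Fin.coe_castLEEmb, Fin.range_castLE, Set.mem_ofPred_eq] at hi
    simp [hi]

theorem pe_rename_inr_of_aeval_eq (hN : n ≤ N) {P : MvPolynomial (Fin N) K}
    {Q : MvPolynomial (Fin n) K}
    (h : ∀ f : Fin N → MvPolynomial (Fin m ⊕ Fin n) K,
      (∀ j ∉ Set.range (Fin.castLEEmb hN), f j = 0) → aeval f P = aeval (f ∘ Fin.castLEEmb hN) Q) :
    pe K M N m n (rename Sum.inr P) = rename Sum.inr Q := by
  rw [pe, aeval_rename, h _ fun j hj => ?_, rename_eq_aeval]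
  · congr 2
    funext j
    simp
  · simp only [Fin.coe_castLEEmb, Fin.range_castLE, Set.mem_ofPred_eq] at hj
    simp [hj]

theorem pe_sigmaX (hM : m ≤ M) (i : ℕ) : pe K M N m n (sigmaX K M N i) = sigmaX K m n i :=
  pe_rename_inl_of_aeval_eq hM fun _ hf => aeval_esymm_of_eq_zero_off_range _ hf i

theorem pe_sigmaY (hN : n ≤ N) (j : ℕ) : pe K M N m n (sigmaY K M N j) = sigmaY K m n j :=
  pe_rename_inr_of_aeval_eq hN fun _ hf => aeval_esymm_of_eq_zero_off_range _ hf j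

theorem pe_rename_inr_hsymm (hN : n ≤ N) (r : ℕ) :
    pe K M N m n (rename Sum.inr (hsymm (Fin N) K r)) = rename Sum.inr (hsymm (Fin n) K r) :=
  pe_rename_inr_of_aeval_eq hN fun _ hf => aeval_hsymm_of_eq_zero_off_range _ hf r

theorem sigmaX_eq_zero_of_lt {i : ℕ} (h : m < i) : sigmaX K m n i = 0 := by
  rw [sigmaX, esymm_eq_zero_of_card_lt (by simpa using h), map_zero]

theorem sigmaY_eq_zero_of_lt {j : ℕ} (h : n < j) : sigmaY K m n j = 0 := by
  rw [sigmaY, esymm_eq_zero_of_card_lt (by simpa using h), map_zero]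

theorem pe_cpoly (hM : m ≤ M) (hN : n ≤ N) (r : ℕ) :
    pe K M N m n (cpoly K M N r) = cpoly K m n r := by
  simp only [cpoly, map_sum, map_mul, map_pow, map_neg, map_one, ← sigmaX.eq_1, pe_sigmaX hM,
    pe_rename_inr_hsymm hN]
  refine (sum_subset (range_subset_range.2 (by omega)) fun i hiM him => ?_).symm
  rw [mem_range] at hiM him
  rw [sigmaX_eq_zero_of_lt (by omega : m < i), mul_zero, zero_mul]

theorem pe_mem_adjoin_nsGens (p : ℕ) (hM : m ≤ M) (hN : n ≤ N)
    {g : MvPolynomial (Fin M ⊕ Fin N) K} (hg : g ∈ nsGens K p M N) :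
    pe K M N m n g ∈ Algebra.adjoin K (nsGens K p m n) := by
  rcases hg with (((⟨r, rfl⟩ | ⟨i, hi, -, rfl⟩) | ⟨j, hj, -, rfl⟩) | ⟨k, hk, hkp, rfl⟩)
  · rw [pe_cpoly hM hN]
    exact Algebra.subset_adjoin (.inl (.inl (.inl ⟨r, rfl⟩)))
  · rw [map_pow, pe_sigmaX hM]
    rcases le_or_gt i m with him | hmi
    · exact Algebra.subset_adjoin (.inl (.inl (.inr ⟨i, hi, him, rfl⟩)))
    · rw [sigmaX_eq_zero_of_lt hmi]
      exact pow_mem (zero_mem _) p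
  · rw [map_pow, pe_sigmaY hN]
    rcases le_or_gt j n with hjn | hnj
    · exact Algebra.subset_adjoin (.inl (.inr ⟨j, hj, hjn, rfl⟩))
    · rw [sigmaY_eq_zero_of_lt hnj]
      exact pow_mem (zero_mem _) p
  · rw [map_mul, map_pow, map_pow, pe_sigmaX hM, pe_sigmaY hN]
    rcases hM.eq_or_lt with rfl | hmM
    · rcases hN.eq_or_lt with rfl | hnN
      · exact Algebra.subset_adjoin (.inr ⟨k, hk, hkp, rfl⟩)
      · rw [sigmaY_eq_zero_of_lt hnN, zero_pow (by omega), mul_zero]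
        exact zero_mem _
    · rw [sigmaX_eq_zero_of_lt hmM, zero_pow hk.ne', zero_mul]
      exact zero_mem _

end

theorem pe_maps_Ans_into_Ans_general (K : Type*) [Field K]
    (p : ℕ) (M N m n : ℕ)
    (hM : m ≤ M) (hN : n ≤ N) :
    ∀ f ∈ Algebra.adjoin K (nsGens K p M N),
      pe K M N m n f ∈ Algebra.adjoin K (nsGens K p m n) := by
  intro f hf
  have hgens : nsGens K p M N ⊆ (Algebra.adjoin K (nsGens K p m n)).comap (pe K M N m n) :=
    fun _ hg => pe_mem_adjoin_nsGens p hM hN hg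
  exact Algebra.adjoin_le hgens hf

/-- **Lemma 1.1.** The evaluation morphism `p_e` maps `A_ns(M|N)` into `A_ns(m|n)`. -/
theorem pe_maps_Ans_into_Ans (K : Type*) [Field K] [IsAlgClosed K]
    (p : ℕ) [CharP K p] (hp : 2 < p) (M N m n : ℕ)
    (hm : 1 ≤ m) (hn : 1 ≤ n) (hM : m ≤ M) (hN : n ≤ N) :
    ∀ f ∈ Algebra.adjoin K (nsGens K p M N),
      pe K M N m n f ∈ Algebra.adjoin K (nsGens K p m n) :=
  pe_maps_Ans_into_Ans_general K p M N m n hM hN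
end

section
/- Let K be an algebraically closed field of characteristic p > 2 and m, n ≥ 1. Suppose a nonzero supersymmetric polynomial f ∈ A_s(m|n) is written as f = (x_1⋯x_m)^a (y_1⋯y_n)^b · g where a > 0, b ≥ 0 are integers and g is a polynomial whose evaluation at x_m = 0, y_n = 0 is nonzero. Then a + b ≡ 0 (mod p). -/
open MvPolynomial

noncomputable section

/-- The substitution `x_m = 0`, `y_n = 0` (all other variables are kept). -/
def evalXY0 (K : Type*) [CommSemiring K] (m n : ℕ) :
    MvPolynomial (Fin m ⊕ Fin n) K →ₐ[K] MvPolynomial (Fin m ⊕ Fin n) K :=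
  MvPolynomial.aeval (Sum.elim
    (fun i : Fin m => if (i : ℕ) = m - 1 then 0 else MvPolynomial.X (Sum.inl i))
    (fun j : Fin n => if (j : ℕ) = n - 1 then 0 else MvPolynomial.X (Sum.inr j)))

/-- If a nonzero supersymmetric polynomial is written as
`f = (x_1⋯x_m)^a (y_1⋯y_n)^b g` with `a > 0`, `b ≥ 0`, and `g|_{x_m = y_n = 0} ≠ 0`,
then `a + b ≡ 0 (mod p)`. -/
theorem exponents_sum_mod_p (K : Type*) [Field K] [IsAlgClosed K]
    (p : ℕ) [CharP K p] (hp : 2 < p) (m n : ℕ) (hm : 1 ≤ m) (hn : 1 ≤ n)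
    (f g : MvPolynomial (Fin m ⊕ Fin n) K) (hf0 : f ≠ 0)
    (hf : IsSupersymmetric K m n f) (a b : ℕ) (ha : 0 < a)
    (hfactor : f = (∏ i : Fin m, MvPolynomial.X (Sum.inl i)) ^ a *
        (∏ j : Fin n, MvPolynomial.X (Sum.inr j)) ^ b * g)
    (hg : evalXY0 K m n g ≠ 0) :
    a + b ≡ 0 [MOD p] := by
  classical
  obtain ⟨-, -, hder⟩ := hf
  have hm1 : m - 1 < m := Nat.sub_lt hm one_pos
  have hn1 : n - 1 < n := Nat.sub_lt hn one_pos
  set im : Fin m := ⟨m - 1, hm1⟩ with him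
  set jn : Fin n := ⟨n - 1, hn1⟩ with hjn
  set u : MvPolynomial (Fin m ⊕ Fin n) K :=
    ∏ i ∈ Finset.univ.erase im, MvPolynomial.X (Sum.inl i) with hu
  set v : MvPolynomial (Fin m ⊕ Fin n) K :=
    ∏ j ∈ Finset.univ.erase jn, MvPolynomial.X (Sum.inr j) with hv
  have hx : psiSub K m n (∏ i : Fin m, MvPolynomial.X (Sum.inl i))
      = Polynomial.X * Polynomial.C u := by
    rw [map_prod, ← Finset.mul_prod_erase Finset.univ _ (Finset.mem_univ im)]
    congr 1
    · simp [psiSub, him]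
    · rw [hu, map_prod]
      refine Finset.prod_congr rfl fun i hi => ?_
      have hne : (i : ℕ) ≠ m - 1 := fun h => (Finset.mem_erase.mp hi).1 (Fin.ext h)
      simp [psiSub, hne]
  have hy : psiSub K m n (∏ j : Fin n, MvPolynomial.X (Sum.inr j))
      = Polynomial.X * Polynomial.C v := by
    rw [map_prod, ← Finset.mul_prod_erase Finset.univ _ (Finset.mem_univ jn)]
    congr 1
    · simp [psiSub, hjn]
    · rw [hv, map_prod]
      refine Finset.prod_congr rfl fun j hj => ?_
      have hne : (j : ℕ) ≠ n - 1 := fun h => (Finset.mem_erase.mp hj).1 (Fin.ext h)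
      simp [psiSub, hne]
  have hF : psiSub K m n f
      = Polynomial.X ^ (a + b) * (Polynomial.C (u ^ a * v ^ b) * psiSub K m n g) := by
    rw [hfactor, map_mul, map_mul, map_pow, map_pow, hx, hy]
    simp only [mul_pow, map_mul, map_pow, pow_add]
    ring
  -- the constant coefficient of psiSub equals evalXY0
  have hq0 : (psiSub K m n g).coeff 0 = evalXY0 K m n g := by
    have hcomp : (((Polynomial.aeval (0 : MvPolynomial (Fin m ⊕ Fin n) K)).restrictScalars
          K).comp (psiSub K m n)) = evalXY0 K m n := by
      apply MvPolynomial.algHom_ext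
      rintro (i | j) <;>
        · simp only [AlgHom.coe_comp, AlgHom.coe_restrictScalars', Function.comp_apply,
            psiSub, evalXY0, MvPolynomial.aeval_X, Sum.elim_inl, Sum.elim_inr]
          split <;> simp
    have hpt := DFunLike.congr_fun hcomp g
    simp only [AlgHom.coe_comp, AlgHom.coe_restrictScalars', Function.comp_apply] at hpt
    rw [Polynomial.coeff_zero_eq_eval_zero, ← hpt]
    simp [Polynomial.aeval_def, Polynomial.eval₂_at_zero, Polynomial.coeff_zero_eq_eval_zero]
  have hcoeff : (psiSub K m n f).coeff (a + b) = u ^ a * v ^ b * evalXY0 K m n g := by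
    rw [hF]
    have h1 := Polynomial.coeff_X_pow_mul
      (Polynomial.C (u ^ a * v ^ b) * psiSub K m n g) (a + b) 0
    rw [zero_add] at h1
    rw [h1, Polynomial.coeff_C_mul, hq0]
  have hcne : u ^ a * v ^ b * evalXY0 K m n g ≠ 0 := by
    have hu0 : u ≠ 0 := Finset.prod_ne_zero_iff.mpr fun i _ => MvPolynomial.X_ne_zero _
    have hv0 : v ≠ 0 := Finset.prod_ne_zero_iff.mpr fun j _ => MvPolynomial.X_ne_zero _
    exact mul_ne_zero (mul_ne_zero (pow_ne_zero _ hu0) (pow_ne_zero _ hv0)) hg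
  have hd := Polynomial.coeff_derivative (psiSub K m n f) (a + b - 1)
  rw [hder, Polynomial.coeff_zero] at hd
  have hab : a + b - 1 + 1 = a + b := by omega
  rw [hab] at hd
  have hcast : ((a + b - 1 : ℕ) : MvPolynomial (Fin m ⊕ Fin n) K) + 1
      = ((a + b : ℕ) : MvPolynomial (Fin m ⊕ Fin n) K) := by
    rw [← Nat.cast_succ, Nat.succ_eq_add_one, hab]
  rw [hcast] at hd
  have hzero : ((a + b : ℕ) : MvPolynomial (Fin m ⊕ Fin n) K) = 0 := by
    rcases mul_eq_zero.mp hd.symm with h | h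
    · rw [hcoeff] at h
      exact absurd h hcne
    · exact h
  have hdvd : p ∣ a + b :=
    (CharP.cast_eq_zero_iff (MvPolynomial (Fin m ⊕ Fin n) K) p (a + b)).mp hzero
  simpa [Nat.modEq_zero_iff_dvd] using hdvd


end
end

section
/- Let K be an algebraically closed field of characteristic p > 2 and m, n ≥ 1. The algebra A_s(m|n) of supersymmetric polynomials is a finitely generated K-algebra. -/
open MvPolynomial

/-!
Every variable `v` is a root of `P(T) = ∏_w (T - w)`, the product over all `m + n` variables.
The coefficients of `P` are symmetric, so in characteristic `p` their `p`-th powers are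
supersymmetric (a `p`-th power has zero derivative); hence `v ^ p` is a root of the monic
polynomial with these `p`-th powers as coefficients. Thus `K[x, y]` is integral, hence finite,
over `A_s(m|n)`, and the Artin–Tate lemma shows that `A_s(m|n)` is a finitely generated
`K`-algebra.
-/

open Polynomial in
theorem isIntegral_of_eval_eq_zero_of_coeff_pow_mem {R A : Type*} [CommRing R] [CommRing A]
    [Algebra R A] (p : ℕ) [ExpChar A p] (B : Subalgebra R A) {P : A[X]} (hP : P.Monic)
    (hB : ∀ i, P.coeff i ^ p ∈ B) {x : A} (hx : P.eval x = 0) : IsIntegral B x := by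
  have hlifts : P.map (frobenius A p) ∈ lifts (algebraMap B A) :=
    (lifts_iff_coeff_lifts _).2 fun i => ⟨⟨_, hB i⟩, by simp [frobenius_def]⟩
  obtain ⟨Q, hQmap, -, hQ⟩ := lifts_and_natDegree_eq_and_monic hlifts (hP.map _)
  refine IsIntegral.of_pow (expChar_pos A p) ⟨Q, hQ, ?_⟩
  rw [Polynomial.eval₂_eq_eval_map, hQmap, ← frobenius_def, Polynomial.eval_map,
    Polynomial.eval₂_hom, hx, map_zero]

theorem rename_coeff_prod_X_sub_C_X {σ R : Type*} [Fintype σ] [CommRing R] (e : Equiv.Perm σ)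
    (k : ℕ) :
    rename e ((∏ v, (Polynomial.X - Polynomial.C (X v : MvPolynomial σ R))).coeff k) =
      (∏ v, (Polynomial.X - Polynomial.C (X v : MvPolynomial σ R))).coeff k := by
  have h : (∏ v, (Polynomial.X - Polynomial.C (X v : MvPolynomial σ R))).map
      (rename e).toRingHom = ∏ v, (Polynomial.X - Polynomial.C (X v)) := by
    simp only [Polynomial.map_prod, Polynomial.map_sub, Polynomial.map_X, Polynomial.map_C,
      AlgHom.toRingHom_eq_coe, RingHom.coe_coe, rename_X]
    exact Equiv.prod_comp e (fun v => Polynomial.X - Polynomial.C (X v))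
  simpa using congrArg (Polynomial.coeff · k) h

section Supersymmetric

variable (K : Type*) (m n : ℕ)

def supersymmetricSubalgebra [CommSemiring K] :
    Subalgebra K (MvPolynomial (Fin m ⊕ Fin n) K) where
  carrier := {f | IsSupersymmetric K m n f}
  mul_mem' {f g} hf hg := by
    refine ⟨fun σ => by rw [map_mul, hf.1 σ, hg.1 σ], fun τ => by rw [map_mul, hf.2.1 τ, hg.2.1 τ],
      ?_⟩
    rw [map_mul, Polynomial.derivative_mul, hf.2.2, hg.2.2, mul_zero, zero_mul, add_zero]
  add_mem' {f g} hf hg := by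
    refine ⟨fun σ => by rw [map_add, hf.1 σ, hg.1 σ], fun τ => by rw [map_add, hf.2.1 τ, hg.2.1 τ],
      ?_⟩
    rw [map_add, Polynomial.derivative_add, hf.2.2, hg.2.2, add_zero]
  algebraMap_mem' c := by
    refine ⟨fun σ => (rename _).commutes c, fun τ => (rename _).commutes c, ?_⟩
    rw [(psiSub K m n).commutes c, Polynomial.algebraMap_apply, Polynomial.derivative_C]

theorem pow_char_mem_supersymmetricSubalgebra [CommSemiring K] (p : ℕ) [CharP K p]
    {f : MvPolynomial (Fin m ⊕ Fin n) K}
    (hx : ∀ σ : Equiv.Perm (Fin m), rename (Sum.map σ id) f = f)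
    (hy : ∀ τ : Equiv.Perm (Fin n), rename (Sum.map id τ) f = f) :
    f ^ p ∈ supersymmetricSubalgebra K m n := by
  refine ⟨fun σ => by rw [map_pow, hx σ], fun τ => by rw [map_pow, hy τ], ?_⟩
  rw [map_pow, Polynomial.derivative_pow, CharP.cast_eq_zero, map_zero, zero_mul, zero_mul]

theorem isIntegral_X_supersymmetricSubalgebra [CommRing K] (p : ℕ) [CharP K p] [Fact p.Prime]
    (v : Fin m ⊕ Fin n) :
    IsIntegral (supersymmetricSubalgebra K m n) (X v : MvPolynomial (Fin m ⊕ Fin n) K) := by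
  have : ExpChar (MvPolynomial (Fin m ⊕ Fin n) K) p := ExpChar.prime Fact.out
  refine isIntegral_of_eval_eq_zero_of_coeff_pow_mem p _
    (P := ∏ w, (Polynomial.X - Polynomial.C (X w : MvPolynomial (Fin m ⊕ Fin n) K)))
    (Polynomial.monic_prod_of_monic _ _ fun w _ => Polynomial.monic_X_sub_C _) (fun k => ?_) ?_
  · exact pow_char_mem_supersymmetricSubalgebra K m n p
      (fun σ => rename_coeff_prod_X_sub_C_X (Equiv.sumCongr σ (Equiv.refl _)) k)
      (fun τ => rename_coeff_prod_X_sub_C_X (Equiv.sumCongr (Equiv.refl _) τ) k)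
  · rw [Polynomial.eval_prod]
    exact Finset.prod_eq_zero (Finset.mem_univ v) (by simp)

theorem finite_supersymmetricSubalgebra [CommRing K] (p : ℕ) [CharP K p] [Fact p.Prime] :
    Module.Finite (supersymmetricSubalgebra K m n) (MvPolynomial (Fin m ⊕ Fin n) K) := by
  have hint : (integralClosure (supersymmetricSubalgebra K m n)
      (MvPolynomial (Fin m ⊕ Fin n) K)).restrictScalars K = ⊤ := by
    rw [eq_top_iff, ← adjoin_range_X, Algebra.adjoin_le_iff]
    rintro _ ⟨v, rfl⟩
    exact isIntegral_X_supersymmetricSubalgebra K m n p v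
  have : Algebra.IsIntegral (supersymmetricSubalgebra K m n) (MvPolynomial (Fin m ⊕ Fin n) K) :=
    ⟨fun f => (hint ▸ Algebra.mem_top : f ∈ _)⟩
  have : Algebra.FiniteType (supersymmetricSubalgebra K m n) (MvPolynomial (Fin m ⊕ Fin n) K) :=
    .of_restrictScalars_finiteType K _ _
  exact Algebra.IsIntegral.finite

end Supersymmetric

theorem As_finitely_generated_general (K : Type*) [Field K]
    (p : ℕ) [CharP K p] (hp : 2 < p) (m n : ℕ) :
    ∃ S : Finset (MvPolynomial (Fin m ⊕ Fin n) K),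
      {f : MvPolynomial (Fin m ⊕ Fin n) K | IsSupersymmetric K m n f} =
        (Algebra.adjoin K (S : Set (MvPolynomial (Fin m ⊕ Fin n) K)) :
          Subalgebra K (MvPolynomial (Fin m ⊕ Fin n) K)) := by
  have : Fact p.Prime := ⟨(CharP.char_is_prime_or_zero K p).resolve_right (by omega)⟩
  have hfin := finite_supersymmetricSubalgebra K m n p
  -- Artin–Tate
  have hfg : (⊤ : Subalgebra K (supersymmetricSubalgebra K m n)).FG :=
    fg_of_fg_of_fg K _ (MvPolynomial (Fin m ⊕ Fin n) K) Algebra.FiniteType.out hfin.fg_top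
      Subtype.val_injective
  obtain ⟨S, hS⟩ := (Subalgebra.fg_top _).1 hfg
  exact ⟨S, by rw [hS]; rfl⟩

/-- **Proposition 4.2.** In positive characteristic, the algebra `A_s(m|n)` of supersymmetric
polynomials is a finitely generated `K`-algebra. -/
theorem As_finitely_generated (K : Type*) [Field K] [IsAlgClosed K]
    (p : ℕ) [CharP K p] (hp : 2 < p) (m n : ℕ) (hm : 1 ≤ m) (hn : 1 ≤ n) :
    ∃ S : Finset (MvPolynomial (Fin m ⊕ Fin n) K),
      {f : MvPolynomial (Fin m ⊕ Fin n) K | IsSupersymmetric K m n f} =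
        (Algebra.adjoin K (S : Set (MvPolynomial (Fin m ⊕ Fin n) K)) :
          Subalgebra K (MvPolynomial (Fin m ⊕ Fin n) K)) :=
  As_finitely_generated_general K p hp m n
end

section
/- Let K be a field of characteristic p > 2 and m, n ≥ 1. Each of the polynomials σ_i(x_1,…,x_m)^p for 1 ≤ i ≤ m, σ_j(y_1,…,y_n)^p for 1 ≤ j ≤ n, and u_k(m|n) = σ_m(x_1,…,x_m)^k σ_n(y_1,…,y_n)^{p−k} for 0 < k < p is supersymmetric, i.e., belongs to A_s(m|n). -/
open MvPolynomial

noncomputable section Aux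

variable (K : Type*) [CommSemiring K] (m n : ℕ)

lemma renameX_sigmaX (i : ℕ) (σ : Equiv.Perm (Fin m)) :
    MvPolynomial.rename (Sum.map σ id) (sigmaX K m n i) = sigmaX K m n i := by
  unfold sigmaX
  rw [rename_rename]
  have h : (Sum.map σ id : Fin m ⊕ Fin n → Fin m ⊕ Fin n) ∘ Sum.inl = Sum.inl ∘ σ := rfl
  rw [h, ← rename_rename, esymm_isSymmetric (Fin m) K i σ]

lemma renameX_sigmaY (j : ℕ) (σ : Equiv.Perm (Fin m)) :
    MvPolynomial.rename (Sum.map σ id) (sigmaY K m n j) = sigmaY K m n j := by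
  unfold sigmaY
  rw [rename_rename]
  rfl

lemma renameY_sigmaX (i : ℕ) (τ : Equiv.Perm (Fin n)) :
    MvPolynomial.rename (Sum.map id τ) (sigmaX K m n i) = sigmaX K m n i := by
  unfold sigmaX
  rw [rename_rename]
  rfl

lemma renameY_sigmaY (j : ℕ) (τ : Equiv.Perm (Fin n)) :
    MvPolynomial.rename (Sum.map id τ) (sigmaY K m n j) = sigmaY K m n j := by
  unfold sigmaY
  rw [rename_rename]
  have h : (Sum.map id τ : Fin m ⊕ Fin n → Fin m ⊕ Fin n) ∘ Sum.inr = Sum.inr ∘ τ := rfl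
  rw [h, ← rename_rename, esymm_isSymmetric (Fin n) K j τ]

lemma esymm_top (σ : Type*) [Fintype σ] [DecidableEq σ] :
    esymm σ K (Fintype.card σ) = ∏ i, X i := by
  rw [esymm]
  rw [show Fintype.card σ = (Finset.univ : Finset σ).card from (Finset.card_univ).symm,
    Finset.powersetCard_self, Finset.sum_singleton]

lemma psiSub_sigmaX_top (hm : 1 ≤ m) :
    ∃ c, psiSub K m n (sigmaX K m n m) = Polynomial.C c * Polynomial.X := by
  have hm' : m - 1 < m := Nat.sub_lt hm one_pos
  refine ⟨∏ i ∈ Finset.univ.erase (⟨m - 1, hm'⟩ : Fin m), (X (Sum.inl i) : MvPolynomial (Fin m ⊕ Fin n) K), ?_⟩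
  unfold sigmaX psiSub
  rw [aeval_rename]
  have : esymm (Fin m) K m = ∏ i, X i := by
    have := esymm_top K (Fin m); rwa [Fintype.card_fin] at this
  rw [this, map_prod]
  simp only [Function.comp_apply, Sum.elim_inl, aeval_X]
  rw [← Finset.mul_prod_erase Finset.univ _ (Finset.mem_univ (⟨m - 1, hm'⟩ : Fin m)),
    if_pos rfl, mul_comm]
  congr 1
  rw [map_prod]
  refine Finset.prod_congr rfl fun i hi => ?_
  have hine : (i : ℕ) ≠ m - 1 := by
    intro h
    exact (Finset.mem_erase.mp hi).1 (Fin.ext h)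
  rw [if_neg hine]

lemma psiSub_sigmaY_top (hn : 1 ≤ n) :
    ∃ c, psiSub K m n (sigmaY K m n n) = Polynomial.C c * Polynomial.X := by
  have hn' : n - 1 < n := Nat.sub_lt hn one_pos
  refine ⟨∏ j ∈ Finset.univ.erase (⟨n - 1, hn'⟩ : Fin n), (X (Sum.inr j) : MvPolynomial (Fin m ⊕ Fin n) K), ?_⟩
  unfold sigmaY psiSub
  rw [aeval_rename]
  have : esymm (Fin n) K n = ∏ i, X i := by
    have := esymm_top K (Fin n); rwa [Fintype.card_fin] at this
  rw [this, map_prod]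
  simp only [Function.comp_apply, Sum.elim_inr, aeval_X]
  rw [← Finset.mul_prod_erase Finset.univ _ (Finset.mem_univ (⟨n - 1, hn'⟩ : Fin n)),
    if_pos rfl, mul_comm]
  congr 1
  rw [map_prod]
  refine Finset.prod_congr rfl fun j hj => ?_
  have hjne : (j : ℕ) ≠ n - 1 := by
    intro h
    exact (Finset.mem_erase.mp hj).1 (Fin.ext h)
  rw [if_neg hjne]

end Aux


noncomputable section

/-- Each of `σ_i(x)^p` (1 ≤ i ≤ m), `σ_j(y)^p` (1 ≤ j ≤ n) and
`u_k = σ_m(x)^k σ_n(y)^{p-k}` (0 < k < p) is supersymmetric. -/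
theorem pBalanced_gens_supersymmetric (K : Type*) [Field K]
    (p : ℕ) [CharP K p] (hp : 2 < p) (m n : ℕ) (hm : 1 ≤ m) (hn : 1 ≤ n) :
    (∀ i : ℕ, 1 ≤ i → i ≤ m → IsSupersymmetric K m n ((sigmaX K m n i) ^ p)) ∧
    (∀ j : ℕ, 1 ≤ j → j ≤ n → IsSupersymmetric K m n ((sigmaY K m n j) ^ p)) ∧
    (∀ k : ℕ, 0 < k → k < p →
      IsSupersymmetric K m n ((sigmaX K m n m) ^ k * (sigmaY K m n n) ^ (p - k))) := by
  have hp0 : ((p : ℕ) : MvPolynomial (Fin m ⊕ Fin n) K) = 0 := by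
    rw [← map_natCast (MvPolynomial.C : K →+* MvPolynomial (Fin m ⊕ Fin n) K) p,
      CharP.cast_eq_zero K p, map_zero]
  refine ⟨fun i _ _ => ⟨?_, ?_, ?_⟩, fun j _ _ => ⟨?_, ?_, ?_⟩, fun k hk hk' => ⟨?_, ?_, ?_⟩⟩
  · intro σ; rw [map_pow, renameX_sigmaX]
  · intro τ; rw [map_pow, renameY_sigmaX]
  · rw [map_pow, Polynomial.derivative_pow, hp0, map_zero, zero_mul, zero_mul]
  · intro σ; rw [map_pow, renameX_sigmaY]
  · intro τ; rw [map_pow, renameY_sigmaY]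
  · rw [map_pow, Polynomial.derivative_pow, hp0, map_zero, zero_mul, zero_mul]
  · intro σ; rw [map_mul, map_pow, map_pow, renameX_sigmaX, renameX_sigmaY]
  · intro τ; rw [map_mul, map_pow, map_pow, renameY_sigmaX, renameY_sigmaY]
  · obtain ⟨a, ha⟩ := psiSub_sigmaX_top K m n hm
    obtain ⟨b, hb⟩ := psiSub_sigmaY_top K m n hn
    rw [map_mul, map_pow, map_pow, ha, hb, mul_pow, mul_pow, mul_mul_mul_comm,
      ← pow_add, Nat.add_sub_cancel' hk'.le, ← map_pow, ← map_pow, ← map_mul,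
      Polynomial.derivative_C_mul, Polynomial.derivative_X_pow, hp0, map_zero,
      zero_mul, mul_zero]


end
end
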